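/- On ℝ³ let ⟨x,y⟩₁,₂ := −x₁y₁ + x₂y₂ + x₃y₃, let SO₀(1,2) := {A ∈ GL(3,ℝ) : ⟨Ax,Ay⟩₁,₂ = ⟨x,y⟩₁,₂ for all x,y, det A = 1, A₁₁ > 0}, and let ×' be the Minkowski cross product (the antisymmetric bilinear map with e₁ ×' e₂ = e₃, e₂ ×' e₃ = −e₁, e₃ ×' e₁ = e₂). Let e₁ = (1,0,0). Then {(b ×' (A·e₁), A·e₁) : b ∈ ℝ³, A ∈ SO₀(1,2)} = {(v,u) ∈ ℝ³ × ℝ³ : ⟨u,u⟩₁,₂ = −1, u₁ > 0, ⟨u,v⟩₁,₂ = 0}. Equivalently, the group ℝ³ ⋊ SO₀(1,2), acting by (b,A)·(v,u) = (A·v + b ×' (A·u), A·u), acts transitively on the tangent bundle of the hyperbolic plane H² = {u : ⟨u,u⟩₁,₂ = −1, u₁ > 0}, which is the orbit of (0,e₁). -/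

import Mathlib

/-!
A Lorentz transformation `A` preserves `⟨·,·⟩₁,₂`, so `u = A e₁` lies on `H²`, and `b ×' u` is
Minkowski-orthogonal to `u`. Conversely, for `u ∈ H²` the hyperbolic boost `B(u)` taking `e₁` to `u`
lies in `SO₀(1,2)`, and for `v ⊥ u` the identity `(a ×' b) ×' c = ⟨b,c⟩ a − ⟨a,c⟩ b` gives
`(u ×' v) ×' u = ⟨v,u⟩ u − ⟨u,u⟩ v = v`, so `(v,u) = ((u ×' v) ×' B(u) e₁, B(u) e₁)`.
-/

/-- The Minkowski inner product `⟨x,y⟩₁,₂ = −x₁y₁ + x₂y₂ + x₃y₃` on `ℝ³`. -/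
def mdot (x y : Fin 3 → ℝ) : ℝ := -(x 0 * y 0) + x 1 * y 1 + x 2 * y 2

/-- The Minkowski cross product on `ℝ³`: `x ×' y = η (x × y)` with `η = diag(−1,1,1)`,
so that `e₁ ×' e₂ = e₃`, `e₂ ×' e₃ = −e₁`, `e₃ ×' e₁ = e₂`. -/
def mcross (x y : Fin 3 → ℝ) : Fin 3 → ℝ :=
  ![-(x 1 * y 2 - x 2 * y 1), x 2 * y 0 - x 0 * y 2, x 0 * y 1 - x 1 * y 0]

open Matrix

lemma mdot_comm (x y : Fin 3 → ℝ) : mdot x y = mdot y x := by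
  simp only [mdot]; ring

lemma mdot_mcross_self (x y : Fin 3 → ℝ) : mdot x (mcross y x) = 0 := by
  simp [mdot, mcross]; ring

lemma mcross_mcross_eq_smul_sub_smul (a b c : Fin 3 → ℝ) :
    mcross (mcross a b) c = mdot b c • a - mdot a c • b := by
  ext i; fin_cases i <;> simp [mcross, mdot] <;> ring

def minkowskiMetric : Matrix (Fin 3) (Fin 3) ℝ := diagonal ![-1, 1, 1]

lemma mdot_eq_dotProduct (x y : Fin 3 → ℝ) : mdot x y = x ⬝ᵥ (minkowskiMetric *ᵥ y) := by
  simp [mdot, minkowskiMetric, dotProduct, mulVec_diagonal, Fin.sum_univ_three]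

lemma mdot_mulVec_mulVec {A : Matrix (Fin 3) (Fin 3) ℝ}
    (hA : Aᵀ * minkowskiMetric * A = minkowskiMetric) (x y : Fin 3 → ℝ) :
    mdot (A *ᵥ x) (A *ᵥ y) = mdot x y := by
  conv_rhs => rw [mdot_eq_dotProduct, ← hA, ← mulVec_mulVec, ← mulVec_mulVec,
    dotProduct_mulVec, vecMul_transpose]
  rw [mdot_eq_dotProduct]

noncomputable def lorentzBoost (u : Fin 3 → ℝ) : Matrix (Fin 3) (Fin 3) ℝ :=
  !![u 0, u 1, u 2;
     u 1, 1 + u 1 * u 1 / (1 + u 0), u 1 * u 2 / (1 + u 0);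
     u 2, u 1 * u 2 / (1 + u 0), 1 + u 2 * u 2 / (1 + u 0)]

lemma lorentzBoost_mulVec_e₁ (u : Fin 3 → ℝ) : lorentzBoost u *ᵥ ![1, 0, 0] = u := by
  ext i; fin_cases i <;> simp [lorentzBoost]

section lorentzBoost

variable {u : Fin 3 → ℝ} (hu : mdot u u = -1) (h : 1 + u 0 ≠ 0)
include hu h

lemma det_lorentzBoost : (lorentzBoost u).det = 1 := by
  simp only [mdot] at hu
  simp only [lorentzBoost, det_fin_three, of_apply, cons_val', cons_val_zero, cons_val_fin_one,
    cons_val_one, cons_val]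
  field_simp
  linear_combination (-(1 + u 0)) * hu

lemma transpose_lorentzBoost_mul_minkowskiMetric_mul_lorentzBoost :
    (lorentzBoost u)ᵀ * minkowskiMetric * lorentzBoost u = minkowskiMetric := by
  simp only [mdot] at hu
  ext i j
  fin_cases i <;> fin_cases j <;>
    simp [lorentzBoost, minkowskiMetric, mul_apply, Fin.sum_univ_three] <;> field_simp <;> grind

end lorentzBoost

/-- The orbit of `(0,e₁)` under the action
`(b,A)·(v,u) = (Av + b ×' (Au), Au)` of `ℝ³ ⋊ SO₀(1,2)` is exactly the tangent bundle
of the hyperbolic plane `H² = {u : ⟨u,u⟩₁,₂ = −1, u₁ > 0}`, i.e.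
`{(b ×' (Ae₁), Ae₁) : b ∈ ℝ³, A ∈ SO₀(1,2)}
  = {(v,u) : ⟨u,u⟩₁,₂ = −1, u₁ > 0, ⟨u,v⟩₁,₂ = 0}`. -/
theorem stmt17 :
    {p : (Fin 3 → ℝ) × (Fin 3 → ℝ) |
      ∃ (b : Fin 3 → ℝ) (A : Matrix (Fin 3) (Fin 3) ℝ),
        (∀ x y : Fin 3 → ℝ, mdot (A.mulVec x) (A.mulVec y) = mdot x y) ∧
        A.det = 1 ∧ 0 < A 0 0 ∧
        p = (mcross b (A.mulVec ![1, 0, 0]), A.mulVec ![1, 0, 0])} =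
    {p : (Fin 3 → ℝ) × (Fin 3 → ℝ) |
      mdot p.2 p.2 = -1 ∧ 0 < p.2 0 ∧ mdot p.2 p.1 = 0} := by
  ext ⟨v, u⟩
  simp only [Set.mem_ofPred_eq]
  constructor
  · rintro ⟨b, A, hA, -, hA₀₀, hp⟩
    obtain ⟨rfl, rfl⟩ := Prod.mk.inj hp
    refine ⟨?_, ?_, mdot_mcross_self _ _⟩
    · rw [hA]; simp [mdot]
    · simpa [mulVec, dotProduct, Fin.sum_univ_three] using hA₀₀
  · rintro ⟨hu, hu₀, hv⟩
    have h : 1 + u 0 ≠ 0 := by positivity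
    refine ⟨mcross u v, lorentzBoost u,
      mdot_mulVec_mulVec (transpose_lorentzBoost_mul_minkowskiMetric_mul_lorentzBoost hu h),
      det_lorentzBoost hu h, hu₀, ?_⟩
    rw [lorentzBoost_mulVec_e₁, mcross_mcross_eq_smul_sub_smul, mdot_comm v, hv, hu]
    simp
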